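/- arXiv:2412.20591 — 9 statements merged into one kernel-verified Lean document; each statement's English description precedes it below -/
import Mathlib

section
/- Let d > 0 and a ≥ 0 be real numbers, and let u, ℓ : ℕ → ℝ be sequences of nonnegative real numbers such that u(0) ≤ 1, u(1) ≤ a/d, ℓ(j) ≤ a·u(j−1) for all j ≥ 1, and u(k) ≤ (1/d)·( Σ_{j=1}^{k} u(k−j)·ℓ(j) + a·u(k−1) ) for all k ≥ 2. Then u(k) ≤ c(k)·(a/d)^k for all k ∈ ℕ. -/
/-!
The sequence `k ↦ c k * (a / d) ^ k` satisfies the recursive inequality for `u` with equality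
when `ℓ j` is replaced by its bound `a * c (j - 1) * (a / d) ^ (j - 1)`: every term of the
convolution carries the same power `(a / d) ^ (k - 1)`, and the convolution of the `c`'s is the
one in the recursion defining `c`. Strong induction then shows that it majorizes `u`.
-/

/-- The coefficient sequence `c` with `c 0 = c 1 = 1` and
`c k = c (k-1) + ∑_{i=0}^{k-1} c i * c (k-1-i)` for `k ≥ 2`. -/
def c : ℕ → ℕ
  | 0 => 1
  | 1 => 1
  | k + 2 =>
      c (k + 1) + ∑ i ∈ (Finset.range (k + 2)).attach, c i.1 * c (k + 1 - i.1)
decreasing_by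
  all_goals first
    | omega
    | (have := Finset.mem_range.mp i.2; omega)

open Finset

lemma c_add_two (m : ℕ) :
    c (m + 2) = c (m + 1) + ∑ i ∈ range (m + 2), c i * c (m + 1 - i) := by
  rw [c, sum_attach (range (m + 2)) fun i => c i * c (m + 1 - i)]

lemma sum_Icc_one_eq_sum_range {M : Type*} [AddCommMonoid M] (f : ℕ → M) (n : ℕ) :
    ∑ j ∈ Icc 1 n, f j = ∑ i ∈ range n, f (i + 1) := by
  rw [← Ico_add_one_right_eq_Icc, sum_Ico_eq_sum_range]
  exact sum_congr (by simp) fun i _ => by rw [add_comm]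

lemma cast_c_mul_pow_add_two (d a : ℝ) (m : ℕ) :
    (c (m + 2) : ℝ) * (a / d) ^ (m + 2) =
      1 / d * ((∑ j ∈ Icc 1 (m + 2),
          (c (m + 2 - j) * (a / d) ^ (m + 2 - j)) * (a * (c (j - 1) * (a / d) ^ (j - 1))))
        + a * (c (m + 1) * (a / d) ^ (m + 1))) := by
  have hterm : ∀ i ∈ range (m + 2),
      (c (m + 2 - (i + 1)) * (a / d) ^ (m + 2 - (i + 1))) *
          (a * (c (i + 1 - 1) * (a / d) ^ (i + 1 - 1)) : ℝ) = (c i * c (m + 1 - i) : ℝ) * (a * (a / d) ^ (m + 1)) := by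
    intro i hi
    have hi : i < m + 2 := mem_range.mp hi
    have hpow : (a / d) ^ (m + 1) = (a / d) ^ (m + 1 - i) * (a / d) ^ i := by
      rw [← pow_add, Nat.sub_add_cancel (by omega)]
    rw [show m + 2 - (i + 1) = m + 1 - i by omega, Nat.add_sub_cancel, hpow]
    ring
  rw [sum_Icc_one_eq_sum_range, sum_congr rfl hterm, ← sum_mul, c_add_two]
  push_cast
  ring

theorem stmt0_general (d a : ℝ) (hd : 0 < d) (ha : 0 ≤ a) (u ℓ : ℕ → ℝ)
    (hℓ : ∀ j, 0 ≤ ℓ j)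
    (hu0 : u 0 ≤ 1) (hu1 : u 1 ≤ a / d)
    (hℓu : ∀ j, 1 ≤ j → ℓ j ≤ a * u (j - 1))
    (hrec : ∀ k, 2 ≤ k →
      u k ≤ (1 / d) * ((∑ j ∈ Finset.Icc 1 k, u (k - j) * ℓ j) + a * u (k - 1))) :
    ∀ k, u k ≤ (c k : ℝ) * (a / d) ^ k := by
  intro k
  induction k using Nat.strong_induction_on with
  | _ k ih =>
    match k with
    | 0 => simpa [c] using hu0
    | 1 => simpa [c] using hu1
    | m + 2 =>
      have hconv : ∀ j ∈ Icc 1 (m + 2), u (m + 2 - j) * ℓ j ≤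
          (c (m + 2 - j) * (a / d) ^ (m + 2 - j)) * (a * (c (j - 1) * (a / d) ^ (j - 1))) := by
        intro j hj
        have hj : 1 ≤ j ∧ j ≤ m + 2 := mem_Icc.mp hj
        have hℓj := (hℓu j hj.1).trans (mul_le_mul_of_nonneg_left (ih (j - 1) (by omega)) ha)
        exact mul_le_mul (ih (m + 2 - j) (by omega)) hℓj (hℓ j) (by positivity)
      have hlast := mul_le_mul_of_nonneg_left (ih (m + 1) (by omega)) ha
      calc u (m + 2)
          ≤ 1 / d * ((∑ j ∈ Icc 1 (m + 2), u (m + 2 - j) * ℓ j) + a * u (m + 1)) :=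
            hrec (m + 2) (by omega)
        _ ≤ _ := mul_le_mul_of_nonneg_left (add_le_add (sum_le_sum hconv) hlast) (by positivity)
        _ = _ := (cast_c_mul_pow_add_two d a m).symm

theorem stmt0 (d a : ℝ) (hd : 0 < d) (ha : 0 ≤ a) (u ℓ : ℕ → ℝ)
    (hu : ∀ k, 0 ≤ u k) (hℓ : ∀ j, 0 ≤ ℓ j)
    (hu0 : u 0 ≤ 1) (hu1 : u 1 ≤ a / d)
    (hℓu : ∀ j, 1 ≤ j → ℓ j ≤ a * u (j - 1))
    (hrec : ∀ k, 2 ≤ k →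
      u k ≤ (1 / d) * ((∑ j ∈ Finset.Icc 1 k, u (k - j) * ℓ j) + a * u (k - 1))) :
    ∀ k, u k ≤ (c k : ℝ) * (a / d) ^ k :=
  stmt0_general d a hd ha u ℓ hℓ hu0 hu1 hℓu hrec
end

section
/- Let d > 0 and a ≥ 0 be real numbers, and let u, ℓ : ℕ → ℝ be sequences of nonnegative real numbers such that u(0) ≤ 1, u(1) ≤ a/d, ℓ(j) ≤ a·u(j−1) for all j ≥ 1, and u(k) ≤ (1/d)·( Σ_{j=1}^{k} u(k−j)·ℓ(j) + a·u(k−1) ) for all k ≥ 2. Then ℓ(k+1) ≤ c(k)·a^{k+1}/d^{k} for all k ∈ ℕ. -/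
lemma c_rec (m : ℕ) :
    c (m + 2) = c (m + 1) + ∑ i ∈ Finset.range (m + 2), c i * c (m + 1 - i) := by
  rw [c]
  congr 1
  exact Finset.sum_attach (Finset.range (m + 2)) (fun i => c i * c (m + 1 - i))

theorem stmt1 (d a : ℝ) (hd : 0 < d) (ha : 0 ≤ a) (u ℓ : ℕ → ℝ)
    (hu : ∀ k, 0 ≤ u k) (hℓ : ∀ j, 0 ≤ ℓ j)
    (hu0 : u 0 ≤ 1) (hu1 : u 1 ≤ a / d)
    (hℓu : ∀ j, 1 ≤ j → ℓ j ≤ a * u (j - 1))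
    (hrec : ∀ k, 2 ≤ k →
      u k ≤ (1 / d) * ((∑ j ∈ Finset.Icc 1 k, u (k - j) * ℓ j) + a * u (k - 1))) :
    ∀ k, ℓ (k + 1) ≤ (c k : ℝ) * a ^ (k + 1) / d ^ k := by
  have hd0 : d ≠ 0 := ne_of_gt hd
  have ub : ∀ k, u k ≤ (c k : ℝ) * a ^ k / d ^ k := by
    intro k
    induction k using Nat.strong_induction_on with
    | _ k ih =>
      match k with
      | 0 => simpa [c] using hu0
      | 1 => simpa [c] using hu1
      | (m + 2) =>
        have hrec' := hrec (m + 2) (by omega)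
        set S := ∑ j ∈ Finset.Icc 1 (m + 2), u (m + 2 - j) * ℓ j with hSdef
        have hS : S ≤ (∑ i ∈ Finset.range (m + 2), (c i : ℝ) * c (m + 1 - i)) *
            a ^ (m + 2) / d ^ (m + 1) := by
          have step : S ≤ ∑ j ∈ Finset.Icc 1 (m + 2),
              ((c (m + 2 - j) : ℝ) * c (j - 1)) * a ^ (m + 2) / d ^ (m + 1) := by
            apply Finset.sum_le_sum
            intro j hj
            obtain ⟨hj1, hj2⟩ := Finset.mem_Icc.mp hj
            have h1 : u (m + 2 - j) ≤ (c (m + 2 - j) : ℝ) * a ^ (m + 2 - j) / d ^ (m + 2 - j) :=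
              ih _ (by omega)
            have h3 : u (j - 1) ≤ (c (j - 1) : ℝ) * a ^ (j - 1) / d ^ (j - 1) :=
              ih _ (by omega)
            have h2 : ℓ j ≤ a * ((c (j - 1) : ℝ) * a ^ (j - 1) / d ^ (j - 1)) :=
              le_trans (hℓu j hj1) (by
                apply mul_le_mul_of_nonneg_left h3 ha)
            have key : u (m + 2 - j) * ℓ j ≤
                ((c (m + 2 - j) : ℝ) * a ^ (m + 2 - j) / d ^ (m + 2 - j)) *
                  (a * ((c (j - 1) : ℝ) * a ^ (j - 1) / d ^ (j - 1))) :=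
              mul_le_mul h1 h2 (hℓ j) (by positivity)
            refine key.trans_eq ?_
            have ea : a ^ (m + 2 - j) * a * a ^ (j - 1) = a ^ (m + 2) := by
              rw [← pow_succ, ← pow_add]; congr 1; omega
            have ed : d ^ (m + 2 - j) * d ^ (j - 1) = d ^ (m + 1) := by
              rw [← pow_add]; congr 1; omega
            rw [← ea, ← ed]
            field_simp
          refine step.trans_eq ?_
          rw [Finset.sum_mul, Finset.sum_div, ← Finset.Ico_add_one_right_eq_Icc,
            Finset.sum_Ico_eq_sum_range]
          have h22 : m + 2 + 1 - 1 = m + 2 := by omega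
          rw [h22]
          apply Finset.sum_congr rfl
          intro i hi
          have hi' := Finset.mem_range.mp hi
          have e1 : m + 2 - (1 + i) = m + 1 - i := by omega
          have e2 : 1 + i - 1 = i := by omega
          rw [e1, e2]
          ring
        have hum1 : u (m + 1) ≤ (c (m + 1) : ℝ) * a ^ (m + 1) / d ^ (m + 1) :=
          ih _ (by omega)
        have h4 : u (m + 2) ≤ (1 / d) *
            ((∑ i ∈ Finset.range (m + 2), (c i : ℝ) * c (m + 1 - i)) *
              a ^ (m + 2) / d ^ (m + 1) +
             a * ((c (m + 1) : ℝ) * a ^ (m + 1) / d ^ (m + 1))) := by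
          refine hrec'.trans ?_
          have : (m + 2 : ℕ) - 1 = m + 1 := by omega
          rw [this]
          apply mul_le_mul_of_nonneg_left _ (by positivity)
          exact add_le_add hS (mul_le_mul_of_nonneg_left hum1 ha)
        refine h4.trans_eq ?_
        rw [c_rec]
        push_cast
        field_simp
        ring
  intro k
  have h1 : ℓ (k + 1) ≤ a * u k := by simpa using hℓu (k + 1) (by omega)
  have h2 : a * u k ≤ a * ((c k : ℝ) * a ^ k / d ^ k) :=
    mul_le_mul_of_nonneg_left (ub k) ha
  refine (h1.trans h2).trans_eq ?_
  rw [pow_succ]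
  field_simp
end

section
/- In the ring of formal power series ℝ⟦X⟧, the series S = Σ_{k=0}^∞ s(k)·X^{k+1} satisfies the quadratic equation S² + (X − 1)·S + X = 0. -/
/-- The large Schröder numbers: `s 0 = 1` and
`s k = s (k-1) + ∑_{i=0}^{k-1} s i * s (k-1-i)` for `k ≥ 1`. -/
def s : ℕ → ℕ
  | 0 => 1
  | k + 1 =>
      s k + ∑ i ∈ (Finset.range (k + 1)).attach, s i.1 * s (k - i.1)
decreasing_by
  all_goals first
    | omega
    | (have := Finset.mem_range.mp i.2; omega)

/-- The generating series `S = ∑_{k} s(k) X^(k+1)` in `ℝ⟦X⟧`. -/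
noncomputable def S : PowerSeries ℝ :=
  PowerSeries.mk fun n => if n = 0 then 0 else (s (n - 1) : ℝ)

/-!
Writing `S = X T` with `T = ∑ s(k) X^k`, the recurrence for `s` says exactly that
`T = 1 + X (T + T²)`; multiplying this identity by `X` gives the quadratic equation for `S`.
-/

open PowerSeries

lemma s_succ (n : ℕ) : s (n + 1) = s n + ∑ i ∈ Finset.range (n + 1), s i * s (n - i) := by
  rw [s, Finset.sum_attach (Finset.range (n + 1)) fun i => s i * s (n - i)]

noncomputable def schroderSeries (R : Type*) [Semiring R] : PowerSeries R :=
  mk fun n => (s n : R)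

lemma coeff_schroderSeries {R : Type*} [Semiring R] (n : ℕ) :
    coeff n (schroderSeries R) = (s n : R) :=
  coeff_mk _ _

lemma schroderSeries_eq_one_add (R : Type*) [CommSemiring R] :
    schroderSeries R = 1 + X * (schroderSeries R + schroderSeries R ^ 2) := by
  ext n
  cases n with
  | zero => simp [coeff_schroderSeries, s]
  | succ n =>
    rw [map_add, coeff_one, if_neg n.succ_ne_zero, zero_add, coeff_succ_X_mul, map_add, sq,
      coeff_mul, Finset.Nat.sum_antidiagonal_eq_sum_range_succ fun i j =>
        coeff i (schroderSeries R) * coeff j (schroderSeries R)]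
    simp only [coeff_schroderSeries, s_succ, Nat.succ_eq_add_one]
    push_cast
    rfl

lemma S_eq_X_mul_schroderSeries : S = X * schroderSeries ℝ := by
  ext n
  cases n with
  | zero => simp [S]
  | succ n =>
    rw [coeff_succ_X_mul, coeff_schroderSeries, S, coeff_mk, if_neg n.succ_ne_zero,
      Nat.add_sub_cancel]

theorem stmt2 : S ^ 2 + (PowerSeries.X - 1) * S + PowerSeries.X = 0 := by
  rw [S_eq_X_mul_schroderSeries]
  linear_combination (-X) * schroderSeries_eq_one_add ℝ
end

section
/- For every natural number m ≥ 1, s(m) = ((−1)^m · 6^{m+1} / 2) · b(m+1). -/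
/-- The generalized binomial coefficient `binom(x, n) = (∏_{i=0}^{n-1} (x - i)) / n!`. -/
noncomputable def gbinom (x : ℝ) (n : ℕ) : ℝ :=
  (∏ i ∈ Finset.range n, (x - i)) / n.factorial

/-- `b m = ∑_{k=0}^{m} binom(1/2, m-k) ⬝ binom(m-k, k) ⬝ 36^(-k)`. -/
noncomputable def b (m : ℕ) : ℝ :=
  ∑ k ∈ Finset.range (m + 1),
    gbinom (1 / 2) (m - k) * ((m - k).choose k : ℝ) * (1 / 36 : ℝ) ^ k

/-!
Substituting `X + X² / 36` into the binomial series of `(1 + X) ^ (1 / 2)` gives a power series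
`B` with coefficients `b m`, so `B (-6X) ^ 2 = 1 - 6X + X²`. The Schröder series `S` satisfies
`S = 1 + X S + X S²`, i.e. `(1 - X - 2 X S) ^ 2 = 1 - 6X + X²` as well. In the integral domain
`ℝ⟦X⟧` the two square roots coincide because both have constant coefficient `1`, and comparing
the coefficients of `X ^ (m + 1)` gives the formula.
-/

open PowerSeries Finset

theorem s_eq_largeSchroder : s = Nat.largeSchroder := by
  funext n
  induction n using Nat.strong_induction_on with
  | _ n ih =>
    cases n with
    | zero => simp [s]
    | succ n =>
      rw [s, Nat.largeSchroder_succ, sum_attach (range (n + 1)) (fun i => s i * s (n - i)),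
        ih n n.lt_succ_self, ← Nat.Iio_eq_range, Iio_add_one_eq_Iic]
      refine congrArg _ (sum_congr rfl fun i hi => ?_)
      rw [ih i (by simp at hi; omega), ih (n - i) (by omega)]

theorem gbinom_eq_ringChoose (x : ℝ) (n : ℕ) : gbinom x n = Ring.choose x n := by
  rw [Ring.choose_eq_smul, ← Polynomial.aeval_eq_smeval, Polynomial.aeval_def,
    ← Polynomial.eval_map, descPochhammer_map, descPochhammer_eval_eq_prod_range, gbinom,
    smul_eq_mul, div_eq_inv_mul]

theorem map_largeSchroderSeries_eq {R : Type*} [CommSemiring R] :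
    map (Nat.castRingHom R) largeSchroderSeries =
      1 + X * map (Nat.castRingHom R) largeSchroderSeries +
        X * map (Nat.castRingHom R) largeSchroderSeries ^ 2 := by
  conv_lhs =>
    rw [largeSchroderSeries_eq_one_add_X_mul_largeSchroderSeries_add_X_mul_largeSchroderSeries_sq]
  simp

namespace PowerSeries

theorem rescale_C {R : Type*} [CommSemiring R] (a r : R) : rescale a (C r) = C r := by
  ext n
  rcases n with _ | n <;> simp [coeff_C]

theorem coeff_one_add_C_mul_X_pow {R : Type*} [CommRing R] (c : R) (d j : ℕ) :
    coeff j ((1 + C c * X : R⟦X⟧) ^ d) = d.choose j * c ^ j := by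
  have h : (1 + C c * X : R⟦X⟧) ^ d =
      rescale c (((1 + Polynomial.X) ^ d : Polynomial R) : R⟦X⟧) := by
    simp [rescale_X]
  rw [h, coeff_rescale, Polynomial.coeff_coe, Polynomial.coeff_one_add_X_pow, mul_comm]

theorem coeff_X_add_C_mul_X_sq_pow {R : Type*} [CommRing R] (c : R) (d m : ℕ) :
    coeff m ((X + C c * X ^ 2 : R⟦X⟧) ^ d) =
      if d ≤ m then d.choose (m - d) * c ^ (m - d) else 0 := by
  rw [show (X + C c * X ^ 2 : R⟦X⟧) = X * (1 + C c * X) by ring, mul_pow, coeff_X_pow_mul',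
    coeff_one_add_C_mul_X_pow]

theorem coeff_subst_X_add_C_mul_X_sq {R : Type*} [CommRing R] (f : R⟦X⟧) (c : R) (m : ℕ) :
    coeff m (f.subst (X + C c * X ^ 2)) =
      ∑ k ∈ range (m + 1), coeff (m - k) f * (m - k).choose k * c ^ k := by
  have ha : HasSubst (X + C c * X ^ 2 : R⟦X⟧) := HasSubst.of_constantCoeff_zero' (by simp)
  rw [coeff_subst' ha, finsum_eq_sum_of_support_subset (s := range (m + 1)), ← sum_range_reflect]
  · refine sum_congr rfl fun k hk => ?_
    have hk : k ≤ m := Nat.lt_succ_iff.mp (mem_range.mp hk)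
    rw [Nat.add_sub_cancel, coeff_X_add_C_mul_X_sq_pow, if_pos (by omega), Nat.sub_sub_self hk,
      smul_eq_mul]
    ring
  · intro d hd
    by_contra h
    simp [coeff_X_add_C_mul_X_sq_pow, show ¬ d ≤ m by simpa using h] at hd

theorem binomialSeries_half_sq {K : Type*} [Field K] [CharZero K] :
    binomialSeries K (1 / 2 : K) ^ 2 = 1 + X := by
  rw [sq, ← binomialSeries_add, add_halves, ← Nat.cast_one, binomialSeries_nat, pow_one]

theorem eq_one_sub_X_sub_two_mul_X_mul {R : Type*} [CommRing R] [IsDomain R] [NeZero (2 : R)]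
    {F G : R⟦X⟧} (hF : F = 1 + X * F + X * F ^ 2) (hG : G ^ 2 = 1 - 6 * X + X ^ 2)
    (hG₀ : constantCoeff G = 1) : G = 1 - X - 2 * X * F := by
  have hF' : (1 - X - 2 * X * F) ^ 2 = 1 - 6 * X + X ^ 2 := by
    linear_combination (-4 * X) * hF
  rcases sq_eq_sq_iff_eq_or_eq_neg.mp (hG.trans hF'.symm) with h | h
  · exact h
  · have h₀ := congrArg constantCoeff h
    simp only [hG₀, map_neg, map_sub, map_one, map_mul, constantCoeff_X, mul_zero, zero_mul,
      sub_zero] at h₀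
    exact absurd (by linear_combination h₀) (two_ne_zero (α := R))

end PowerSeries

noncomputable def bSeries : ℝ⟦X⟧ :=
  (PowerSeries.binomialSeries ℝ (1 / 2 : ℝ)).subst (X + C (1 / 36) * X ^ 2)

theorem coeff_bSeries (m : ℕ) : coeff m bSeries = b m := by
  simp [bSeries, b, coeff_subst_X_add_C_mul_X_sq, gbinom_eq_ringChoose]

theorem bSeries_sq : bSeries ^ 2 = 1 + X + C (1 / 36) * X ^ 2 := by
  have ha : HasSubst (X + C (1 / 36 : ℝ) * X ^ 2) := HasSubst.of_constantCoeff_zero' (by simp)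
  rw [bSeries, ← subst_pow ha, binomialSeries_half_sq, ← coe_substAlgHom ha, map_add, map_one,
    coe_substAlgHom ha, subst_X ha, add_assoc]

theorem rescale_bSeries_sq : rescale (-6) bSeries ^ 2 = 1 - 6 * X + X ^ 2 := by
  rw [← map_pow, bSeries_sq]
  simp only [map_add, map_one, map_mul, map_pow, rescale_X, rescale_C]
  rw [mul_pow, ← mul_assoc, ← map_pow, ← map_mul, show (1 / 36 : ℝ) * (-6) ^ 2 = 1 by norm_num,
    map_one, one_mul, map_neg, map_ofNat]
  ring

theorem stmt3 (m : ℕ) (hm : 1 ≤ m) :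
    (s m : ℝ) = ((-1 : ℝ) ^ m * 6 ^ (m + 1) / 2) * b (m + 1) := by
  have hb₀ : constantCoeff (rescale (-6) bSeries) = 1 := by
    simp [← coeff_zero_eq_constantCoeff_apply, coeff_bSeries, b, gbinom]
  have key := congrArg (coeff (m + 1))
    (eq_one_sub_X_sub_two_mul_X_mul map_largeSchroderSeries_eq rescale_bSeries_sq hb₀)
  rw [← map_ofNat C 2, mul_comm (C 2) X, mul_assoc, map_sub, map_sub, coeff_succ_X_mul,
    coeff_C_mul, coeff_rescale, coeff_bSeries, coeff_one, coeff_X, if_neg (by omega),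
    if_neg (by omega), coeff_map, coeff_largeSchroderSeries, ← s_eq_largeSchroder,
    Nat.coe_castRingHom] at key
  rw [show (-6 : ℝ) = -1 * 6 by norm_num, mul_pow] at key
  linear_combination (1 / 2) * key
end

section
/- For every natural number m, b(m) = binom(1/2, m) · Σ_{k=0}^{m} [ ((1−m)/2)_k · (−m/2)_k / ( (3/2 − m)_k · k! ) ] · (1/9)^k, where all Pochhammer symbols are evaluated in ℝ (note (3/2 − m)_k ≠ 0 for all k, m ∈ ℕ). -/
open Polynomial Finset

theorem ascPochhammer_eval_two_mul {K : Type*} [Field K] [NeZero (2 : K)] (y : K) (k : ℕ) :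
    (ascPochhammer K (2 * k)).eval (2 * y) =
      4 ^ k * (ascPochhammer K k).eval y * (ascPochhammer K k).eval (y + 1 / 2) := by
  induction k with
  | zero => simp
  | succ k ih =>
    rw [show 2 * (k + 1) = 2 * k + 1 + 1 by ring, ascPochhammer_succ_eval, ascPochhammer_succ_eval,
      ih, ascPochhammer_succ_eval, ascPochhammer_succ_eval]
    push_cast
    field_simp
    ring

theorem four_pow_mul_ascPochhammer_eval_neg_half_mul {K : Type*} [Field K] [NeZero (2 : K)]
    (n k : ℕ) :
    4 ^ k * (ascPochhammer K k).eval (-(n : K) / 2) *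
        (ascPochhammer K k).eval ((1 - (n : K)) / 2) =
      n.descFactorial (2 * k) := by
  have h := ascPochhammer_eval_two_mul (-(n : K) / 2) k
  rw [mul_div_cancel₀ _ two_ne_zero, ascPochhammer_eval_neg_eq_descPochhammer,
    descPochhammer_eval_eq_descFactorial, pow_mul, neg_one_sq, one_pow, one_mul] at h
  rw [h, ← add_div, neg_add_eq_sub]

theorem descPochhammer_eval_eq_mul_ascPochhammer_eval {R : Type*} [CommRing R] (x : R) {n k : ℕ}
    (hk : k ≤ n) :
    (descPochhammer R n).eval x =
      (descPochhammer R (n - k)).eval x * (ascPochhammer R k).eval (x - n + 1) := by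
  obtain ⟨j, rfl⟩ := Nat.exists_eq_add_of_le' hk
  rw [← descPochhammer_mul, eval_mul, eval_comp]
  simp only [eval_sub, eval_X, eval_natCast, Nat.add_sub_cancel, Nat.cast_add,
    descPochhammer_eval_eq_ascPochhammer R (x - j) k]
  ring_nf

theorem gbinom_eq_descPochhammer_eval_div (x : ℝ) (n : ℕ) :
    gbinom x n = (descPochhammer ℝ n).eval x / n.factorial := by
  rw [gbinom, descPochhammer_eval_eq_prod_range]

theorem ascPochhammer_eval_three_halves_sub_ne_zero (m k : ℕ) :
    (ascPochhammer ℝ k).eval (3 / 2 - (m : ℝ)) ≠ 0 := by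
  rw [Ne, ascPochhammer_eval_eq_zero_iff]
  rintro ⟨j, -, hj⟩
  have hcast : ((2 * j + 3 : ℕ) : ℝ) = (2 * m : ℕ) := by push_cast; linarith
  have := Nat.cast_injective hcast
  omega

theorem b_summand_eq (m k : ℕ) (hk : k ≤ m) :
    gbinom (1 / 2) (m - k) * ((m - k).choose k : ℝ) * (1 / 36 : ℝ) ^ k =
      gbinom (1 / 2) m *
        ((ascPochhammer ℝ k).eval ((1 - (m : ℝ)) / 2) *
              (ascPochhammer ℝ k).eval (-(m : ℝ) / 2) /
            ((ascPochhammer ℝ k).eval (3 / 2 - (m : ℝ)) * (k.factorial : ℝ)) *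
          (1 / 9 : ℝ) ^ k) := by
  have hsplit := descPochhammer_eval_eq_mul_ascPochhammer_eval (1 / 2 : ℝ) hk
  rw [show (1 / 2 : ℝ) - m + 1 = 3 / 2 - m by ring] at hsplit
  have hAB := four_pow_mul_ascPochhammer_eval_neg_half_mul (K := ℝ) m k
  have hdesc : ((m - k).descFactorial k * m.descFactorial k : ℝ) = m.descFactorial (2 * k) := by
    have h := Nat.descFactorial_mul_descFactorial (n := m) (show k ≤ 2 * k by omega)
    rw [show 2 * k - k = k by omega] at h
    exact_mod_cast h
  have hfact : ((m - k).factorial * m.descFactorial k : ℝ) = m.factorial := by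
    exact_mod_cast Nat.factorial_mul_descFactorial hk
  have hchoose : ((m - k).descFactorial k : ℝ) = k.factorial * (m - k).choose k := by
    exact_mod_cast Nat.descFactorial_eq_factorial_mul_choose _ _
  have hC := ascPochhammer_eval_three_halves_sub_ne_zero m k
  rw [gbinom_eq_descPochhammer_eval_div, gbinom_eq_descPochhammer_eval_div, hsplit]
  generalize (ascPochhammer ℝ k).eval ((1 - (m : ℝ)) / 2) = A at hAB ⊢
  generalize (ascPochhammer ℝ k).eval (-(m : ℝ) / 2) = B at hAB ⊢
  generalize (ascPochhammer ℝ k).eval (3 / 2 - (m : ℝ)) = C at hC ⊢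
  rw [← hdesc, hchoose] at hAB
  have hD : (m.descFactorial k : ℝ) ≠ 0 := by
    exact_mod_cast (Nat.descFactorial_pos.mpr hk).ne'
  rw [← hfact, one_div_pow, one_div_pow,
    show (36 : ℝ) ^ k = 9 ^ k * 4 ^ k by rw [← mul_pow]; norm_num]
  field_simp
  linear_combination -(descPochhammer ℝ (m - k)).eval (1 / 2) * hAB

theorem stmt4 (m : ℕ) :
    b m = gbinom (1 / 2) m *
      ∑ k ∈ Finset.range (m + 1),
        (Polynomial.eval ((1 - (m : ℝ)) / 2) (ascPochhammer ℝ k) *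
          Polynomial.eval (-(m : ℝ) / 2) (ascPochhammer ℝ k) /
          (Polynomial.eval (3 / 2 - (m : ℝ)) (ascPochhammer ℝ k) * (k.factorial : ℝ))) *
        (1 / 9 : ℝ) ^ k := by
  rw [b, mul_sum]
  exact sum_congr rfl fun k hk => b_summand_eq m k (Nat.lt_succ_iff.mp (mem_range.mp hk))
end

section
/- The sequence m ↦ |b(m)| tends to 0 as m → ∞. -/
open Polynomial Finset

lemma gbinom_succ (x : ℝ) (n : ℕ) :
    gbinom x (n + 1) = gbinom x n * (x - n) / (n + 1) := by
  rw [gbinom, gbinom, prod_range_succ, Nat.factorial_succ]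
  push_cast
  rw [div_mul_eq_mul_div, div_div, mul_comm ((n:ℝ)+1)]

noncomputable abbrev g (n : ℕ) : ℝ := gbinom (1/2) n

lemma g_rec (n : ℕ) : 2 * ((n : ℝ) + 1) * g (n + 1) = (1 - 2 * n) * g n := by
  have h1 : ((n : ℝ) + 1) ≠ 0 := by positivity
  show 2 * ((n : ℝ) + 1) * gbinom (1/2) (n + 1) = (1 - 2 * n) * gbinom (1/2) n
  rw [gbinom_succ]
  field_simp

noncomputable def y : ℝ[X] := X + C (1/36) * X ^ 2

lemma coeff_y_pow (n m : ℕ) :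
    (y ^ n).coeff m = if n ≤ m then (n.choose (m - n) : ℝ) * (1/36 : ℝ) ^ (m - n) else 0 := by
  rw [y, add_pow, finset_sum_coeff]
  have hterm : ∀ k ∈ range (n + 1),
      (X ^ k * (C (1/36 : ℝ) * X ^ 2) ^ (n - k) * (n.choose k : ℝ[X])).coeff m
      = if m = k + 2 * (n - k) then ((n.choose k : ℝ) * (1/36 : ℝ) ^ (n - k)) else 0 := by
    intro k hk
    have h : (X ^ k * (C (1/36 : ℝ) * X ^ 2) ^ (n - k) * (n.choose k : ℝ[X]))
        = C ((n.choose k : ℝ) * (1/36 : ℝ) ^ (n - k)) * X ^ (k + 2 * (n - k)) := by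
      rw [mul_pow, ← C_pow, ← pow_mul, ← C_eq_natCast, C_mul]
      ring
    rw [h, coeff_C_mul, coeff_X_pow, mul_ite, mul_one, mul_zero]
  rw [Finset.sum_congr rfl hterm]
  by_cases hnm : n ≤ m
  · by_cases hm2 : m ≤ 2 * n
    · rw [Finset.sum_eq_single_of_mem (2 * n - m)
        (by simp [Finset.mem_range]; omega)
        (by intro x hx hne; rw [if_neg]; simp only [Finset.mem_range] at hx; omega)]
      rw [if_pos (by omega), if_pos hnm]
      have h1 : n - (2 * n - m) = m - n := by omega
      have h2 : 2 * n - m = n - (m - n) := by omega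
      rw [h1, h2, Nat.choose_symm (by omega)]
    · rw [Finset.sum_eq_zero (by intro x hx; rw [if_neg]; simp only [Finset.mem_range] at hx; omega),
        if_pos hnm, Nat.choose_eq_zero_of_lt (by omega), Nat.cast_zero, zero_mul]
  · rw [Finset.sum_eq_zero (by intro x hx; rw [if_neg]; simp only [Finset.mem_range] at hx; omega),
      if_neg hnm]

noncomputable def Q (M : ℕ) : ℝ[X] := ∑ n ∈ Finset.range (M + 1), C (g n) * y ^ n

lemma coeff_Q {m M : ℕ} (h : m ≤ M) : (Q M).coeff m = b m := by
  rw [Q, finset_sum_coeff]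
  have : ∀ n ∈ range (M + 1), (C (g n) * y ^ n).coeff m
      = if n ≤ m then g n * ((n.choose (m - n) : ℝ) * (1/36 : ℝ) ^ (m - n)) else 0 := by
    intro n hn
    rw [coeff_C_mul, coeff_y_pow, mul_ite, mul_zero]
  rw [Finset.sum_congr rfl this]
  have hsub : ∑ x ∈ range (m + 1), (if x ≤ m then g x * ((x.choose (m - x) : ℝ) * (1/36 : ℝ) ^ (m - x)) else 0)
      = ∑ x ∈ range (M + 1), (if x ≤ m then g x * ((x.choose (m - x) : ℝ) * (1/36 : ℝ) ^ (m - x)) else 0) :=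
    Finset.sum_subset (Finset.range_subset_range.mpr (by omega))
      (fun x hx hnx => if_neg (by simp only [Finset.mem_range] at hx hnx ⊢; omega))
  rw [← hsub]
  rw [Finset.sum_congr rfl (fun x hx => if_pos (by simp only [Finset.mem_range] at hx; omega))]
  rw [← Finset.sum_range_reflect, b]
  refine Finset.sum_congr rfl fun j hj => ?_
  simp only [Finset.mem_range] at hj
  have h1 : m + 1 - 1 - j = m - j := by omega
  have h2 : m - (m - j) = j := by omega
  rw [h1, h2]
  ring

lemma key (M : ℕ) :
    2 * (1 + y) * derivative (Q M) - derivative y * Q M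
      = derivative y * ((2 * ((M : ℕ) : ℝ[X]) - 1) * C (g M) * y ^ M) := by
  induction M with
  | zero =>
    have hg0 : g 0 = 1 := by simp [gbinom]
    have hQ0 : Q 0 = 1 := by simp [Q, hg0]
    rw [hQ0, derivative_one, hg0]
    push_cast
    simp only [map_one]
    ring
  | succ M IH =>
    have hQs : Q (M + 1) = Q M + C (g (M + 1)) * y ^ (M + 1) := by
      rw [Q, Q, Finset.sum_range_succ]
    have hC : 2 * (((M : ℕ) : ℝ[X]) + 1) * C (g (M + 1)) = (1 - 2 * ((M : ℕ) : ℝ[X])) * C (g M) := by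
      have h := congrArg C (g_rec M)
      push_cast at h ⊢
      simpa only [map_mul, map_sub, map_add, map_one, map_ofNat, C_eq_natCast] using h
    rw [hQs, derivative_add, derivative_C_mul, derivative_pow, Nat.add_sub_cancel, C_eq_natCast]
    push_cast
    linear_combination IH + derivative y * y ^ M * hC

lemma b_rec (k : ℕ) :
    2 * ((k : ℝ) + 3) * b (k + 3) + (2 * (k : ℝ) + 3) * b (k + 2)
      + ((k : ℝ) / 18) * b (k + 1) = 0 := by
  have hy' : derivative y = 1 + C (1/18 : ℝ) * X := by
    rw [y, derivative_add, derivative_X, derivative_C_mul_X_sq]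
    norm_num
  set P := derivative (Q (k + 3)) with hP
  have hL : 2 * (1 + y) * derivative (Q (k + 3)) - derivative y * Q (k + 3)
      = ((P + X * P + C (1/36 : ℝ) * (X ^ 2 * P)) + (P + X * P + C (1/36 : ℝ) * (X ^ 2 * P)))
        - (Q (k + 3) + C (1/18 : ℝ) * (X * Q (k + 3))) := by
    rw [hy', y]
    ring
  have hy : y = X * (1 + C (1/36 : ℝ) * X) := by rw [y]; ring
  have hR : derivative y * ((2 * ((k + 3 : ℕ) : ℝ[X]) - 1) * C (g (k + 3)) * y ^ (k + 3))
      = (derivative y * ((2 * ((k + 3 : ℕ) : ℝ[X]) - 1) * C (g (k + 3))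
          * (1 + C (1/36 : ℝ) * X) ^ (k + 3))) * X ^ (k + 3) := by
    rw [hy, mul_pow]
    ring
  have heq := congrArg (fun p : ℝ[X] => p.coeff (k + 2)) (key (k + 3))
  simp only [hL, hR] at heq
  have cXP : (X * P).coeff (k + 2) = P.coeff (k + 1) := Polynomial.coeff_X_mul P (k + 1)
  have cX2P : (X ^ 2 * P).coeff (k + 2) = P.coeff k := Polynomial.coeff_X_pow_mul P 2 k
  have cXQ : (X * Q (k + 3)).coeff (k + 2) = (Q (k + 3)).coeff (k + 1) :=
    Polynomial.coeff_X_mul (Q (k + 3)) (k + 1)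
  have cd0 : P.coeff (k + 2) = b (k + 3) * ((k : ℝ) + 3) := by
    rw [hP, coeff_derivative, coeff_Q (by omega)]; push_cast; ring
  have cd1 : P.coeff (k + 1) = b (k + 2) * ((k : ℝ) + 2) := by
    rw [hP, coeff_derivative, coeff_Q (by omega)]; push_cast; ring
  have cd2 : P.coeff k = b (k + 1) * ((k : ℝ) + 1) := by
    rw [hP, coeff_derivative, coeff_Q (by omega)]
  have cR : ((derivative y * ((2 * ((k + 3 : ℕ) : ℝ[X]) - 1) * C (g (k + 3))
          * (1 + C (1/36 : ℝ) * X) ^ (k + 3))) * X ^ (k + 3)).coeff (k + 2) = 0 := by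
    rw [Polynomial.coeff_mul_X_pow']
    simp
  simp only [coeff_sub, coeff_add, coeff_C_mul, cXP, cX2P, cXQ, cd0, cd1, cd2, cR,
    coeff_Q (show k + 2 ≤ k + 3 by omega), coeff_Q (show k + 1 ≤ k + 3 by omega)] at heq
  linarith [heq]

lemma b_two : b 2 = -(1/9) := by
  norm_num [b, Finset.sum_range_succ, gbinom, Finset.prod_range_succ, Nat.factorial]

lemma b_three : b 3 = 1/18 := by
  norm_num [b, Finset.sum_range_succ, gbinom, Finset.prod_range_succ, Nat.factorial]

noncomputable def β (m : ℕ) : ℝ := (-1 : ℝ) ^ (m + 1) * b m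

lemma beta_rec (k : ℕ) :
    2 * ((k : ℝ) + 3) * β (k + 3) - (2 * (k : ℝ) + 3) * β (k + 2)
      + ((k : ℝ) / 18) * β (k + 1) = 0 := by
  have h := b_rec k
  simp only [β, pow_succ]
  linear_combination ((-1 : ℝ) ^ k) * h

lemma inv : ∀ k : ℕ, 0 < β (k + 2) ∧ β (k + 2) ≤ 3 * β (k + 3) ∧ β (k + 3) ≤ β (k + 2)
    ∧ ((k : ℝ) + 3) * β (k + 3) ≤ 1/6 := by
  intro k
  induction k with
  | zero =>
    norm_num [β, b_two, b_three]
  | succ k IH =>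
    obtain ⟨h1, h2, h3, h4⟩ := IH
    have hr := beta_rec (k + 1)
    push_cast at hr
    have hk : (0 : ℝ) ≤ (k : ℝ) := Nat.cast_nonneg k
    have hb3 : 0 < β (k + 3) := by linarith
    push_cast
    refine ⟨hb3, ?_, ?_, ?_⟩
    · nlinarith [mul_le_mul_of_nonneg_left h2 hk, mul_nonneg hk hb3.le]
    · nlinarith [mul_nonneg hk h1.le, mul_nonneg hk hb3.le]
    · have hrm : ((k : ℝ) + 4) * (2 * ((k : ℝ) + 1 + 3) * β (k + 4))
          - ((k : ℝ) + 4) * ((2 * ((k : ℝ) + 1) + 3) * β (k + 3))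
          + ((k : ℝ) + 4) * (((k : ℝ) + 1) / 18 * β (k + 2)) = 0 := by
        linear_combination ((k : ℝ) + 4) * hr
      have hstep : ((k : ℝ) + 4) * β (k + 4) ≤ ((k : ℝ) + 3) * β (k + 3) := by
        nlinarith [hrm, mul_nonneg hk h1.le, mul_nonneg hk hb3.le,
          mul_nonneg (mul_nonneg hk hk) hb3.le, mul_nonneg (mul_nonneg hk hk) h1.le]
      linarith

theorem stmt8 : Filter.Tendsto (fun m : ℕ => |b m|) Filter.atTop (nhds 0) := by
  have hg : Filter.Tendsto (fun m : ℕ => (1/6 : ℝ) * (1 / m)) Filter.atTop (nhds 0) := by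
    have := tendsto_one_div_atTop_nhds_zero_nat.const_mul (1/6 : ℝ)
    simpa using this
  refine squeeze_zero' ?_ ?_ hg
  · exact Filter.Eventually.of_forall fun m => abs_nonneg _
  · rw [Filter.eventually_atTop]
    refine ⟨3, fun m hm => ?_⟩
    obtain ⟨k, rfl⟩ : ∃ k, m = k + 3 := ⟨m - 3, by omega⟩
    obtain ⟨h1, h2, h3, h4⟩ := inv k
    have hb3 : 0 < β (k + 3) := by linarith
    have habs : |b (k + 3)| = β (k + 3) := by
      have h' : |b (k + 3)| = |β (k + 3)| := by
        rw [β, abs_mul, abs_pow, abs_neg, abs_one, one_pow, one_mul]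
      rw [h', abs_of_pos hb3]
    have hpos : (0:ℝ) < (k : ℝ) + 3 := by positivity
    rw [habs]
    push_cast
    rw [mul_one_div, le_div_iff₀ hpos]
    linarith
end

section
/- There exists a constant C > 0 such that for all real numbers d > 0 and a with 0 ≤ a < d/6, the series Σ_{k=1}^∞ c(k−1)·a^k/d^{k−1} is summable and its sum satisfies Σ_{k=1}^∞ c(k−1)·a^k/d^{k−1} ≤ C·a·(1 − 6a/d)^{−1}. -/
noncomputable def tt (k : ℕ) : ℝ := (c k : ℝ) / 6 ^ k

lemma tt_nonneg (k : ℕ) : 0 ≤ tt k := by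
  unfold tt; positivity

lemma tt_rec (k : ℕ) :
    tt (k + 2) = tt (k + 1) / 6 + (1 / 6) * ∑ i ∈ Finset.range (k + 2), tt i * tt (k + 1 - i) := by
  have hc : (c (k+2) : ℝ) = c (k+1) + ∑ i ∈ Finset.range (k+2), (c i : ℝ) * c (k+1-i) := by
    rw [c]
    push_cast
    rw [← Finset.sum_attach (Finset.range (k+2)) (fun i => (c i : ℝ) * (c (k+1-i) : ℝ))]
  unfold tt
  rw [hc, add_div, Finset.mul_sum, Finset.sum_div]
  congr 1
  · rw [pow_succ]; ring
  · apply Finset.sum_congr rfl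
    intro i hi
    have hi' : i ≤ k + 1 := by
      have := Finset.mem_range.mp hi; omega
    have h6 : (6:ℝ) ^ i * 6 ^ (k + 1 - i) = 6 ^ (k + 1) := by
      rw [← pow_add]; congr 1; omega
    rw [div_mul_div_comm, h6, pow_succ]
    ring

lemma conv_le (N : ℕ) :
    ∑ j ∈ Finset.range N, ∑ i ∈ Finset.range (j + 1), tt i * tt (j - i)
      ≤ (∑ i ∈ Finset.range N, tt i) * (∑ i ∈ Finset.range N, tt i) := by
  have swap := Finset.sum_Ico_Ico_comm 0 N (fun i j => tt i * tt (j - i))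
  simp only [Finset.range_eq_Ico] at *
  rw [← swap]
  calc ∑ i ∈ Finset.Ico 0 N, ∑ j ∈ Finset.Ico i N, tt i * tt (j - i)
      ≤ ∑ i ∈ Finset.Ico 0 N, tt i * ∑ l ∈ Finset.Ico 0 N, tt l := by
        apply Finset.sum_le_sum
        intro i hi
        rw [Finset.sum_Ico_eq_sum_range]
        simp only [Nat.add_sub_cancel_left]
        rw [← Finset.mul_sum]
        apply mul_le_mul_of_nonneg_left _ (tt_nonneg i)
        apply Finset.sum_le_sum_of_subset_of_nonneg
        · rw [Finset.range_eq_Ico]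
          exact Finset.Ico_subset_Ico (le_refl 0) (by omega)
        · intro j _ _; exact tt_nonneg j
    _ = (∑ i ∈ Finset.Ico 0 N, tt i) * (∑ i ∈ Finset.Ico 0 N, tt i) := by
        rw [← Finset.sum_mul]

lemma tt0 : tt 0 = 1 := by simp [tt, c]
lemma tt1 : tt 1 = 1 / 6 := by simp [tt, c]

lemma partial_le_two : ∀ N : ℕ, ∑ i ∈ Finset.range N, tt i ≤ 2 := by
  intro N
  induction N with
  | zero => simp
  | succ n ih =>
    cases n with
    | zero => simp [tt0]
    | succ m =>
      -- goal : ∑ i ∈ range (m+2), tt i ≤ 2, ih : ∑ i ∈ range (m+1), tt i ≤ 2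
      set B := ∑ i ∈ Finset.range (m+1), tt i with hB
      have hBnn : 0 ≤ B := Finset.sum_nonneg fun i _ => tt_nonneg i
      have e1 : ∑ i ∈ Finset.range (m+2), tt i
          = (∑ i ∈ Finset.range m, tt (i+2)) + tt 1 + tt 0 := by
        rw [Finset.sum_range_succ' (fun i => tt i) (m+1),
            Finset.sum_range_succ' (fun i => tt (i+1)) m]
      have e2 : ∑ i ∈ Finset.range m, tt (i+1) = B - tt 0 := by
        rw [hB, Finset.sum_range_succ' (fun i => tt i) m]; ring
      have e3 : ∑ j ∈ Finset.range (m+1),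
            ∑ i ∈ Finset.range (j+1), tt i * tt (j - i)
          = (∑ j ∈ Finset.range m, ∑ i ∈ Finset.range (j+2), tt i * tt (j + 1 - i)) + 1 := by
        rw [Finset.sum_range_succ' (fun j => ∑ i ∈ Finset.range (j+1), tt i * tt (j - i)) m]
        simp [tt0]
      have e4 : ∑ i ∈ Finset.range m, tt (i+2)
          = (1/6) * (B - tt 0)
            + (1/6) * ∑ j ∈ Finset.range m, ∑ i ∈ Finset.range (j+2), tt i * tt (j + 1 - i) := by
        rw [← e2]
        rw [Finset.mul_sum, Finset.mul_sum, ← Finset.sum_add_distrib]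
        apply Finset.sum_congr rfl
        intro i _
        rw [tt_rec i]
        ring
      have hconv := conv_le (m+1)
      rw [e3] at hconv
      rw [e1, e4, tt0, tt1]
      nlinarith [hconv, ih, hBnn]

lemma c_le (k : ℕ) : (c k : ℝ) ≤ 2 * 6 ^ k := by
  have h := partial_le_two (k+1)
  rw [Finset.sum_range_succ] at h
  have h2 : tt k ≤ 2 := by
    have := Finset.sum_nonneg (fun i (_ : i ∈ Finset.range k) => tt_nonneg i)
    linarith
  unfold tt at h2
  rw [div_le_iff₀ (by positivity)] at h2
  linarith [h2]

/-- There is a constant `C > 0` such that whenever `0 ≤ a < d/6`, the series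
`∑_{k=1}^∞ c (k-1) * a^k / d^(k-1)` (written here with index shifted by one)
is summable, with sum at most `C * a * (1 - 6a/d)⁻¹`. -/
theorem stmt10 :
    ∃ C : ℝ, 0 < C ∧ ∀ d a : ℝ, 0 < d → 0 ≤ a → a < d / 6 →
      Summable (fun k : ℕ => (c k : ℝ) * a ^ (k + 1) / d ^ k) ∧
      ∑' k : ℕ, (c k : ℝ) * a ^ (k + 1) / d ^ k ≤ C * a * (1 - 6 * a / d)⁻¹ := by
  refine ⟨2, by norm_num, fun d a hd ha had => ?_⟩
  have hr0 : 0 ≤ a / d := by positivity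
  have hr1 : 6 * (a / d) < 1 := by
    have h6 : 6 * a < d := by linarith
    rw [show 6 * (a / d) = 6 * a / d by ring, div_lt_one hd]
    exact h6
  have hq0 : (0:ℝ) ≤ 6 * (a / d) := by positivity
  have hgeo : Summable (fun k : ℕ => 2 * a * (6 * (a / d)) ^ k) :=
    (summable_geometric_of_lt_one hq0 hr1).mul_left _
  have hle : ∀ k : ℕ, (c k : ℝ) * a ^ (k + 1) / d ^ k ≤ 2 * a * (6 * (a / d)) ^ k := by
    intro k
    have hck := c_le k
    have hrw : (c k : ℝ) * a ^ (k + 1) / d ^ k = (c k : ℝ) * a * (a / d) ^ k := by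
      rw [div_pow, pow_succ]
      field_simp
    rw [hrw, mul_pow]
    have h1 : (0:ℝ) ≤ (a / d) ^ k := by positivity
    have h2 : (c k : ℝ) * a ≤ 2 * 6 ^ k * a :=
      mul_le_mul_of_nonneg_right hck ha
    calc (c k : ℝ) * a * (a / d) ^ k ≤ 2 * 6 ^ k * a * (a / d) ^ k :=
          mul_le_mul_of_nonneg_right h2 h1
      _ = 2 * a * (6 ^ k * (a / d) ^ k) := by ring
  have hnn : ∀ k : ℕ, 0 ≤ (c k : ℝ) * a ^ (k + 1) / d ^ k := by
    intro k; positivity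
  have hsum : Summable (fun k : ℕ => (c k : ℝ) * a ^ (k + 1) / d ^ k) :=
    Summable.of_nonneg_of_le hnn hle hgeo
  refine ⟨hsum, ?_⟩
  have htsum := Summable.tsum_le_tsum hle hsum hgeo
  rw [tsum_mul_left, tsum_geometric_of_lt_one hq0 hr1] at htsum
  calc ∑' k : ℕ, (c k : ℝ) * a ^ (k + 1) / d ^ k ≤ 2 * a * (1 - 6 * (a / d))⁻¹ := htsum
    _ = 2 * a * (1 - 6 * a / d)⁻¹ := by rw [mul_div_assoc]
end

section
/- Let V be a finite type with at least two elements, let α > 0 and τ ≥ 1 be real numbers, and let d, δ : V → V → ℝ be symmetric functions vanishing exactly on the diagonal and positive off the diagonal, such that δ(v,w) ≤ d(v,w) ≤ τ·δ(v,w) for all v ≠ w. Let L_d and L_δ be the Laplacian matrices with weight functions d(v,w)^{−α} and δ(v,w)^{−α} respectively (off the diagonal, and 0 on the diagonal). Then for every index k, the k-th smallest eigenvalue λ_k(L_d) of L_d satisfies τ^{−α}·λ_k(L_δ) ≤ λ_k(L_d) ≤ λ_k(L_δ), where λ_k(L_δ) is the k-th smallest eigenvalue of L_δ. -/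
/-!
Both Laplacians have quadratic form `x ↦ ½ ∑ w v u (x v - x u)²`, and off the diagonal the weights
satisfy `τ^(-α) δ^(-α) ≤ d^(-α) ≤ δ^(-α)`, so the quadratic forms satisfy `τ^(-α) q_δ ≤ q_d ≤ q_δ`.
A comparison `c q_B ≤ q_A` with `c ≥ 0` passes to every sorted eigenvalue (Courant–Fischer): the
eigenvectors of `A` for `λ₀, …, λₖ` and those of `B` for `λₖ, λₖ₊₁, …` span subspaces of dimensions
`k + 1` and `n - k`, which therefore share a nonzero vector `x`, and on `x` the Rayleigh quotients
give `c λₖ(B) ‖x‖² ≤ c q_B x ≤ q_A x ≤ λₖ(A) ‖x‖²`.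
-/

open scoped Matrix

/-- The Laplacian matrix of a weight function `w : V → V → ℝ`:
diagonal entries `∑_{u ≠ v} w v u`, off-diagonal entries `-w v u`. -/
def lapMatrix (V : Type*) [Fintype V] [DecidableEq V] (w : V → V → ℝ) :
    Matrix V V ℝ :=
  fun v u => if v = u then ∑ x ∈ Finset.univ.erase v, w v x else -w v u

/-- The eigenvalues of a Hermitian (real symmetric) matrix, listed in
nondecreasing order with multiplicity; `sortedEigenvalues hA k` is the
`k`-th smallest eigenvalue of `A`. -/
noncomputable def sortedEigenvalues {V : Type*} [Fintype V] [DecidableEq V]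
    {A : Matrix V V ℝ} (hA : A.IsHermitian) : Fin (Fintype.card V) → ℝ :=
  (hA.eigenvalues ∘ (Fintype.equivFin V).symm) ∘
    Tuple.sort (hA.eigenvalues ∘ (Fintype.equivFin V).symm)

open Finset
open scoped RealInnerProductSpace

theorem Module.Basis.finrank_span_image_finset {K M ι : Type*} [DivisionRing K] [AddCommGroup M]
    [Module K M] (b : Module.Basis ι K M) (S : Finset ι) :
    Module.finrank K (Submodule.span K (b '' S)) = #S := by
  rw [Set.image_eq_range]
  exact (finrank_span_eq_card (b.linearIndependent.comp _ Subtype.val_injective)).trans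
    (Fintype.card_coe S)

namespace OrthonormalBasis

variable {ι E : Type*} [Fintype ι] [NormedAddCommGroup E] [InnerProductSpace ℝ E]
  (b : OrthonormalBasis ι ℝ E) {T : E →ₗ[ℝ] E} {μ : ι → ℝ}

theorem inner_map_self_eq_sum (hT : ∀ i, T (b i) = μ i • b i) (x : E) :
    ⟪x, T x⟫ = ∑ i, μ i * ⟪b i, x⟫ ^ 2 := by
  have hTx : T x = ∑ i, (μ i * ⟪b i, x⟫) • b i := by
    conv_lhs => rw [← b.sum_repr' x]
    simp only [map_sum, map_smul, hT, smul_smul, mul_comm]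
  rw [hTx, inner_sum]
  refine sum_congr rfl fun i _ => ?_
  rw [real_inner_smul_right, real_inner_comm]
  ring

theorem inner_eq_zero_of_mem_span_image {S : Set ι} {x : E}
    (hx : x ∈ Submodule.span ℝ (b '' S)) {i : ι} (hi : i ∉ S) : ⟪b i, x⟫ = 0 := by
  rw [← b.coe_toBasis, Module.Basis.mem_span_image] at hx
  rw [← b.repr_apply_apply, ← b.coe_toBasis_repr_apply]
  exact Finsupp.notMem_support_iff.1 fun h => hi (hx h)

theorem inner_map_self_le_of_mem_span (hT : ∀ i, T (b i) = μ i • b i) {S : Set ι} {m : ℝ}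
    (hμ : ∀ i ∈ S, μ i ≤ m) {x : E} (hx : x ∈ Submodule.span ℝ (b '' S)) :
    ⟪x, T x⟫ ≤ m * ‖x‖ ^ 2 := by
  rw [b.inner_map_self_eq_sum hT, ← b.sum_sq_norm_inner_right x, mul_sum]
  refine sum_le_sum fun i _ => ?_
  rw [Real.norm_eq_abs, sq_abs]
  by_cases hi : i ∈ S
  · exact mul_le_mul_of_nonneg_right (hμ i hi) (sq_nonneg _)
  · simp [b.inner_eq_zero_of_mem_span_image hx hi]

theorem le_inner_map_self_of_mem_span (hT : ∀ i, T (b i) = μ i • b i) {S : Set ι} {m : ℝ}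
    (hμ : ∀ i ∈ S, m ≤ μ i) {x : E} (hx : x ∈ Submodule.span ℝ (b '' S)) :
    m * ‖x‖ ^ 2 ≤ ⟪x, T x⟫ := by
  rw [b.inner_map_self_eq_sum hT, ← b.sum_sq_norm_inner_right x, mul_sum]
  refine sum_le_sum fun i _ => ?_
  rw [Real.norm_eq_abs, sq_abs]
  by_cases hi : i ∈ S
  · exact mul_le_mul_of_nonneg_right (hμ i hi) (sq_nonneg _)
  · simp [b.inner_eq_zero_of_mem_span_image hx hi]

end OrthonormalBasis

section EigenvalueComparison

variable {E : Type*} [NormedAddCommGroup E] [InnerProductSpace ℝ E] {n : ℕ}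

theorem mul_le_of_forall_mul_inner_map_self_le {A B : E →ₗ[ℝ] E}
    (a b : OrthonormalBasis (Fin n) ℝ E) {μ ν : Fin n → ℝ}
    (ha : ∀ i, A (a i) = μ i • a i) (hb : ∀ i, B (b i) = ν i • b i)
    (hμ : Monotone μ) (hν : Monotone ν) {c : ℝ} (hc : 0 ≤ c)
    (h : ∀ x, c * ⟪x, B x⟫ ≤ ⟪x, A x⟫) (k : Fin n) :
    c * ν k ≤ μ k := by
  have := Module.Finite.of_basis a.toBasis
  obtain ⟨x, hxa, hxb, hx0⟩ : ∃ x ∈ Submodule.span ℝ (a '' ↑(Iic k)),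
      x ∈ Submodule.span ℝ (b '' ↑(Ici k)) ∧ x ≠ 0 := by
    by_contra! hdisj
    have hdim := Submodule.finrank_add_finrank_le_of_disjoint (Submodule.disjoint_def.2 hdisj)
    rw [← a.coe_toBasis, ← b.coe_toBasis, a.toBasis.finrank_span_image_finset,
      b.toBasis.finrank_span_image_finset, Module.finrank_eq_card_basis a.toBasis,
      Fin.card_Iic, Fin.card_Ici, Fintype.card_fin] at hdim
    omega
  have hx : 0 < ‖x‖ ^ 2 := pow_pos (norm_pos_iff.2 hx0) 2
  refine le_of_mul_le_mul_right ?_ hx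
  calc c * ν k * ‖x‖ ^ 2 = c * (ν k * ‖x‖ ^ 2) := mul_assoc _ _ _
    _ ≤ c * ⟪x, B x⟫ := mul_le_mul_of_nonneg_left
        (b.le_inner_map_self_of_mem_span hb (fun i hi => hν (mem_Ici.1 hi)) hxb) hc
    _ ≤ ⟪x, A x⟫ := h x
    _ ≤ μ k * ‖x‖ ^ 2 := a.inner_map_self_le_of_mem_span ha (fun i hi => hμ (mem_Iic.1 hi)) hxa

end EigenvalueComparison

section SortedEigenvalues

variable {V : Type*} [Fintype V] [DecidableEq V] {A : Matrix V V ℝ}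

theorem sortedEigenvalues_monotone (hA : A.IsHermitian) : Monotone (sortedEigenvalues hA) :=
  Tuple.monotone_sort _

noncomputable def sortedEigenvectorBasis (hA : A.IsHermitian) :
    OrthonormalBasis (Fin (Fintype.card V)) ℝ (EuclideanSpace ℝ V) :=
  hA.eigenvectorBasis.reindex
    ((Tuple.sort (hA.eigenvalues ∘ (Fintype.equivFin V).symm)).trans
      (Fintype.equivFin V).symm).symm

theorem toLpLin_sortedEigenvectorBasis (hA : A.IsHermitian) (i : Fin (Fintype.card V)) :
    Matrix.toLpLin 2 2 A (sortedEigenvectorBasis hA i) =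
      sortedEigenvalues hA i • sortedEigenvectorBasis hA i := by
  ext v
  simpa [sortedEigenvectorBasis, sortedEigenvalues, Matrix.toLpLin_apply] using
    congrFun (hA.mulVec_eigenvectorBasis _) v

theorem inner_toLpLin_self (A : Matrix V V ℝ) (x : EuclideanSpace ℝ V) :
    ⟪x, Matrix.toLpLin 2 2 A x⟫ = x.ofLp ⬝ᵥ A *ᵥ x.ofLp := by
  rw [EuclideanSpace.inner_eq_star_dotProduct, Matrix.toLpLin_apply, star_trivial,
    dotProduct_comm]

theorem mul_sortedEigenvalues_le_of_forall_dotProduct_mulVec_le {B : Matrix V V ℝ}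
    (hA : A.IsHermitian) (hB : B.IsHermitian) {c : ℝ} (hc : 0 ≤ c)
    (h : ∀ x : V → ℝ, c * (x ⬝ᵥ B *ᵥ x) ≤ x ⬝ᵥ A *ᵥ x) (k : Fin (Fintype.card V)) :
    c * sortedEigenvalues hB k ≤ sortedEigenvalues hA k :=
  mul_le_of_forall_mul_inner_map_self_le (sortedEigenvectorBasis hA) (sortedEigenvectorBasis hB)
    (toLpLin_sortedEigenvectorBasis hA) (toLpLin_sortedEigenvectorBasis hB)
    (sortedEigenvalues_monotone hA) (sortedEigenvalues_monotone hB) hc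
    (fun x => by simpa only [inner_toLpLin_self] using h x.ofLp) k

end SortedEigenvalues

section Laplacian

variable {V : Type*} [Fintype V] [DecidableEq V]

theorem lapMatrix_mulVec_apply (w : V → V → ℝ) (x : V → ℝ) (v : V) :
    (lapMatrix V w *ᵥ x) v = ∑ u, w v u * (x v - x u) := by
  rw [Matrix.mulVec, dotProduct, ← add_sum_erase _ _ (mem_univ v),
    ← add_sum_erase _ _ (mem_univ v)]
  simp only [lapMatrix, if_true, sub_self, mul_zero, zero_add]
  rw [sum_mul, ← sum_add_distrib]
  refine sum_congr rfl fun u hu => ?_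
  rw [if_neg (ne_of_mem_erase hu).symm]
  ring

theorem dotProduct_lapMatrix_mulVec {w : V → V → ℝ} (hw : ∀ v u, w v u = w u v) (x : V → ℝ) :
    x ⬝ᵥ lapMatrix V w *ᵥ x = (∑ v, ∑ u, w v u * (x v - x u) ^ 2) / 2 := by
  have hswap : ∑ v, ∑ u, w v u * x v * (x v - x u) = ∑ v, ∑ u, w v u * x u * (x u - x v) := by
    rw [sum_comm]
    simp only [hw]
  have hexpand : x ⬝ᵥ lapMatrix V w *ᵥ x = ∑ v, ∑ u, w v u * x v * (x v - x u) :=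
    sum_congr rfl fun v _ => by
      rw [lapMatrix_mulVec_apply, mul_sum]
      exact sum_congr rfl fun u _ => by ring
  rw [hexpand, eq_div_iff two_ne_zero, mul_two]
  nth_rewrite 2 [hswap]
  simp only [← sum_add_distrib]
  exact sum_congr rfl fun v _ => sum_congr rfl fun u _ => by ring

theorem mul_dotProduct_lapMatrix_mulVec_le {w₁ w₂ : V → V → ℝ} (hw₁ : ∀ v u, w₁ v u = w₁ u v)
    (hw₂ : ∀ v u, w₂ v u = w₂ u v) {c : ℝ} (hle : ∀ v u, v ≠ u → c * w₁ v u ≤ w₂ v u)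
    (x : V → ℝ) :
    c * (x ⬝ᵥ lapMatrix V w₁ *ᵥ x) ≤ x ⬝ᵥ lapMatrix V w₂ *ᵥ x := by
  rw [dotProduct_lapMatrix_mulVec hw₁, dotProduct_lapMatrix_mulVec hw₂, mul_div_assoc', mul_sum]
  gcongr with v
  rw [mul_sum]
  refine sum_le_sum fun u _ => ?_
  rcases eq_or_ne v u with rfl | hvu
  · simp
  · rw [← mul_assoc]
    exact mul_le_mul_of_nonneg_right (hle v u hvu) (sq_nonneg _)

end Laplacian

theorem stmt13_general (V : Type*) [Fintype V] [DecidableEq V]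
    (α τ : ℝ) (hα : 0 < α) (hτ : 1 ≤ τ)
    (d δ : V → V → ℝ)
    (hdsym : ∀ v w, d v w = d w v) (hδsym : ∀ v w, δ v w = δ w v)
    (hdpos : ∀ v w, v ≠ w → 0 < d v w) (hδpos : ∀ v w, v ≠ w → 0 < δ v w)
    (henc : ∀ v w, v ≠ w → δ v w ≤ d v w ∧ d v w ≤ τ * δ v w)
    (hLd : (lapMatrix V fun v w => if v = w then 0 else d v w ^ (-α)).IsHermitian)
    (hLδ : (lapMatrix V fun v w => if v = w then 0 else δ v w ^ (-α)).IsHermitian)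
    (k : Fin (Fintype.card V)) :
    τ ^ (-α) * sortedEigenvalues hLδ k ≤ sortedEigenvalues hLd k ∧
      sortedEigenvalues hLd k ≤ sortedEigenvalues hLδ k := by
  have hτ0 : 0 < τ := one_pos.trans_le hτ
  have hα' : -α ≤ 0 := neg_nonpos.2 hα.le
  have hsym : ∀ f : V → V → ℝ, (∀ v w, f v w = f w v) →
      ∀ v w, (if v = w then 0 else f v w ^ (-α)) = if w = v then 0 else f w v ^ (-α) := by
    intro f hf v w
    simp only [eq_comm (a := v), hf v w]
  constructor
  · refine mul_sortedEigenvalues_le_of_forall_dotProduct_mulVec_le hLd hLδ (by positivity)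
      (mul_dotProduct_lapMatrix_mulVec_le (hsym δ hδsym) (hsym d hdsym) fun v w hvw => ?_) k
    simp only [if_neg hvw]
    calc τ ^ (-α) * δ v w ^ (-α) = (τ * δ v w) ^ (-α) :=
          (Real.mul_rpow hτ0.le (hδpos v w hvw).le).symm
      _ ≤ d v w ^ (-α) := Real.rpow_le_rpow_of_nonpos (hdpos v w hvw) (henc v w hvw).2 hα'
  · simpa using mul_sortedEigenvalues_le_of_forall_dotProduct_mulVec_le hLδ hLd zero_le_one
      (mul_dotProduct_lapMatrix_mulVec_le (hsym d hdsym) (hsym δ hδsym) fun v w hvw => by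
        simpa only [if_neg hvw, one_mul] using
          Real.rpow_le_rpow_of_nonpos (hδpos v w hvw) (henc v w hvw).1 hα') k

theorem stmt13 (V : Type*) [Fintype V] [DecidableEq V] [Nontrivial V]
    (α τ : ℝ) (hα : 0 < α) (hτ : 1 ≤ τ)
    (d δ : V → V → ℝ)
    (hdsym : ∀ v w, d v w = d w v) (hδsym : ∀ v w, δ v w = δ w v)
    (hd0 : ∀ v w, d v w = 0 ↔ v = w) (hδ0 : ∀ v w, δ v w = 0 ↔ v = w)
    (hdpos : ∀ v w, v ≠ w → 0 < d v w) (hδpos : ∀ v w, v ≠ w → 0 < δ v w)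
    (henc : ∀ v w, v ≠ w → δ v w ≤ d v w ∧ d v w ≤ τ * δ v w)
    (hLd : (lapMatrix V fun v w => if v = w then 0 else d v w ^ (-α)).IsHermitian)
    (hLδ : (lapMatrix V fun v w => if v = w then 0 else δ v w ^ (-α)).IsHermitian)
    (k : Fin (Fintype.card V)) :
    τ ^ (-α) * sortedEigenvalues hLδ k ≤ sortedEigenvalues hLd k ∧
      sortedEigenvalues hLd k ≤ sortedEigenvalues hLδ k :=
  stmt13_general V α τ hα hτ d δ hdsym hδsym hdpos hδpos henc hLd hLδ k
end

section
/- Let V be a finite type, δ : V → V → ℝ an ultrametric (δ(v,w) = 0 iff v = w, δ symmetric, and δ(u,w) ≤ max(δ(u,v), δ(v,w)) for all u,v,w), μ : V → ℝ a strictly positive weight, and α > 0. Define the operator L on functions f : V → ℝ by (Lf)(v) = Σ_{w ≠ v} δ(v,w)^{−α}·(f(v) − f(w))·μ(w). Fix b ∈ V and ρ > 0, and let B = {w ∈ V : δ(b,w) ≤ ρ} be the closed ball of radius ρ around b. Suppose f : V → ℝ satisfies: (i) f(w) = 0 for all w ∉ B; (ii) Σ_{w ∈ B} f(w)·μ(w)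 = 0; and (iii) f(v) = f(w) whenever v, w ∈ B and δ(v,w) < ρ. Then f is an eigenfunction: Lf = λ_B·f, where λ_B = Σ_{w ∉ B} δ(b,w)^{−α}·μ(w) + ρ^{−α}·Σ_{w ∈ B} μ(w). -/
theorem stmt15 (V : Type*) [Fintype V] [DecidableEq V]
    (δ : V → V → ℝ)
    (hδ0 : ∀ v w, δ v w = 0 ↔ v = w)
    (hδsym : ∀ v w, δ v w = δ w v)
    (hδultra : ∀ u v w, δ u w ≤ max (δ u v) (δ v w))
    (μ : V → ℝ) (hμ : ∀ v, 0 < μ v)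
    (α : ℝ) (hα : 0 < α)
    (b : V) (ρ : ℝ) (hρ : 0 < ρ)
    (B : Finset V) (hB : B = Finset.univ.filter fun w => δ b w ≤ ρ)
    (f : V → ℝ)
    (hsupp : ∀ w, w ∉ B → f w = 0)
    (hmean : ∑ w ∈ B, f w * μ w = 0)
    (hloc : ∀ v ∈ B, ∀ w ∈ B, δ v w < ρ → f v = f w) :
    ∀ v : V,
      ∑ w ∈ Finset.univ.filter (fun w => w ≠ v), δ v w ^ (-α) * (f v - f w) * μ w =
        ((∑ w ∈ Finset.univ.filter (fun w => w ∉ B), δ b w ^ (-α) * μ w) +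
            ρ ^ (-α) * ∑ w ∈ B, μ w) * f v := by
  intro v
  have hmemB : ∀ w, w ∈ B ↔ δ b w ≤ ρ := by intro w; simp [hB]
  have hout : ∀ u w, δ b u ≤ ρ → ρ < δ b w → δ u w = δ b w := by
    intro u w hu hw
    apply le_antisymm
    · have h := hδultra u b w
      rw [hδsym u b] at h
      exact h.trans (max_le (hu.trans hw.le) le_rfl)
    · have h := hδultra b u w
      rcases max_cases (δ b u) (δ u w) with ⟨he, _⟩ | ⟨he, _⟩
      · rw [he] at h; linarith
      · rw [he] at h; exact h
  -- extend the sum over all of univ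
  have hext : ∑ w ∈ Finset.univ.filter (fun w => w ≠ v), δ v w ^ (-α) * (f v - f w) * μ w
      = ∑ w, δ v w ^ (-α) * (f v - f w) * μ w := by
    rw [Finset.sum_filter]
    refine Finset.sum_congr rfl fun w _ => ?_
    by_cases h : w = v
    · subst h; simp
    · simp [h]
  rw [hext]
  rw [← Finset.sum_filter_add_sum_filter_not Finset.univ (· ∈ B)]
  have hBfilt : Finset.univ.filter (· ∈ B) = B := by ext w; simp
  rw [hBfilt]
  by_cases hv : v ∈ B
  · have hvb : δ b v ≤ ρ := (hmemB v).1 hv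
    have h1 : ∑ w ∈ Finset.univ.filter (fun x => x ∉ B), δ v w ^ (-α) * (f v - f w) * μ w
        = (∑ w ∈ Finset.univ.filter (fun w => w ∉ B), δ b w ^ (-α) * μ w) * f v := by
      rw [Finset.sum_mul]
      refine Finset.sum_congr rfl fun w hw => ?_
      rw [Finset.mem_filter] at hw
      have hwB : ρ < δ b w := lt_of_not_ge (fun h => hw.2 ((hmemB w).2 h))
      rw [hout v w hvb hwB, hsupp w hw.2]
      ring
    have h2 : ∑ w ∈ B, δ v w ^ (-α) * (f v - f w) * μ w
        = ρ ^ (-α) * (∑ w ∈ B, μ w) * f v := by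
      have step : ∀ w ∈ B, δ v w ^ (-α) * (f v - f w) * μ w
          = ρ ^ (-α) * (f v - f w) * μ w := by
        intro w hw
        have hle : δ v w ≤ ρ := by
          have h := hδultra v b w
          rw [hδsym v b] at h
          exact h.trans (max_le hvb ((hmemB w).1 hw))
        rcases lt_or_eq_of_le hle with hlt | heq
        · rw [hloc v hv w hw hlt]; ring
        · rw [heq]
      rw [Finset.sum_congr rfl step]
      have : ∑ w ∈ B, ρ ^ (-α) * (f v - f w) * μ w
          = ρ ^ (-α) * ((∑ w ∈ B, μ w) * f v - ∑ w ∈ B, f w * μ w) := by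
        simp only [mul_sub, sub_mul, Finset.sum_sub_distrib, Finset.mul_sum, Finset.sum_mul]
        congr 1 <;> exact Finset.sum_congr rfl fun w _ => by ring
      rw [this, hmean]
      ring
    rw [h1, h2]
    ring
  · have hfv : f v = 0 := hsupp v hv
    have hvb : ρ < δ b v := lt_of_not_ge (fun h => hv ((hmemB v).2 h))
    have h1 : ∑ w ∈ Finset.univ.filter (fun x => x ∉ B), δ v w ^ (-α) * (f v - f w) * μ w
        = 0 := by
      refine Finset.sum_eq_zero fun w hw => ?_
      rw [Finset.mem_filter] at hw
      rw [hfv, hsupp w hw.2]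
      ring
    have h2 : ∑ w ∈ B, δ v w ^ (-α) * (f v - f w) * μ w = 0 := by
      have step : ∀ w ∈ B, δ v w ^ (-α) * (f v - f w) * μ w
          = -(δ b v ^ (-α)) * (f w * μ w) := by
        intro w hw
        have := hout w v ((hmemB w).1 hw) hvb
        rw [hδsym v w, this, hfv]
        ring
      rw [Finset.sum_congr rfl step, ← Finset.mul_sum, hmean, mul_zero]
    rw [h1, h2, hfv, mul_zero, add_zero]
end
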